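/- Suppose E[‖x' − x*‖²] ≤ (1 − 2αc)‖x − x*‖² + α²M² with 0 < 2αc < 1, α²M² < 2αcε, and ‖x − x*‖² > ε. Then, for the concave nondecreasing function plog and constant β = ε/(2αcε − α²M²), one has β·E[plog(‖x' − x*‖²/ε)] + 1 ≤ β·plog(‖x − x*‖²/ε). Equivalently, W_t(x_t,…) = β·plog(‖x_t − x*‖²/ε) + t is a rate supermartingale for the sequential SGD process outside the success region. -/

import Mathlib

/-!
`plog` is concave and has slope `1 / r` at every `r ≥ 1`, so integrating its tangent line at
`r = ‖x - x*‖² / ε` bounds `E[plog Y]` by `plog r + (E[Y] - r) / r`, where `Y = ‖x' - x*‖² / ε`.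
The one-step contraction gives `E[Y] ≤ (1 - 2αc) r + α²M² / ε`, hence a drift of at least
`2αc - α²M² / (ε r) ≥ 1 / β`; multiplying by `β` yields the supermartingale inequality.
-/

open MeasureTheory

/-- The piecewise logarithm. -/
noncomputable def plog (x : ℝ) : ℝ := if 1 ≤ x then Real.log (Real.exp 1 * x) else x

lemma plog_of_one_le {x : ℝ} (hx : 1 ≤ x) : plog x = 1 + Real.log x := by
  rw [plog, if_pos hx, Real.log_mul (Real.exp_ne_zero 1) (by linarith), Real.log_exp]

lemma plog_of_lt_one {x : ℝ} (hx : x < 1) : plog x = x := by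
  rw [plog, if_neg (not_le.mpr hx)]

lemma plog_le_plog_add_div {r : ℝ} (hr : 1 ≤ r) (y : ℝ) : plog y ≤ plog r + (y - r) / r := by
  have hr0 : 0 < r := by linarith
  rw [plog_of_one_le hr]
  rcases le_or_gt 1 y with hy | hy
  · have hlog := Real.log_le_sub_one_of_pos (div_pos (by linarith : 0 < y) hr0)
    rw [Real.log_div (by linarith) hr0.ne'] at hlog
    rw [plog_of_one_le hy, sub_div, div_self hr0.ne']
    linarith
  · have hlog := Real.one_sub_inv_le_log_of_pos hr0
    have hslope : y * (1 - r⁻¹) ≤ 1 - r⁻¹ :=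
      mul_le_of_le_one_left (sub_nonneg.2 (inv_le_one_of_one_le₀ hr)) hy.le
    rw [plog_of_lt_one hy, sub_div, div_self hr0.ne', div_eq_mul_inv]
    linarith

lemma integral_le_of_le_affine {Ω : Type*} [MeasurableSpace Ω] {μ : Measure Ω}
    [IsProbabilityMeasure μ] {g : ℝ → ℝ} {Y : Ω → ℝ} {a k : ℝ} (hY : Integrable Y μ)
    (hgY : Integrable (fun ω => g (Y ω)) μ) (hg : ∀ y, g y ≤ a + k * y) :
    ∫ ω, g (Y ω) ∂μ ≤ a + k * ∫ ω, Y ω ∂μ := by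
  calc ∫ ω, g (Y ω) ∂μ ≤ ∫ ω, (a + k * Y ω) ∂μ :=
        integral_mono hgY ((integrable_const a).add (hY.const_mul k)) fun ω => hg (Y ω)
    _ = a + k * ∫ ω, Y ω ∂μ := by
        rw [integral_add (integrable_const a) (hY.const_mul k), integral_const_mul,
          integral_const, probReal_univ, one_smul]

lemma integral_plog_le {Ω : Type*} [MeasurableSpace Ω] {μ : Measure Ω}
    [IsProbabilityMeasure μ] {Y : Ω → ℝ} {r : ℝ} (hr : 1 ≤ r) (hY : Integrable Y μ)
    (hplogY : Integrable (fun ω => plog (Y ω)) μ) :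
    ∫ ω, plog (Y ω) ∂μ ≤ plog r + (∫ ω, Y ω ∂μ - r) / r := by
  have hdiv (t : ℝ) : (t - r) / r = r⁻¹ * t - 1 := by field_simp
  have h := integral_le_of_le_affine (a := plog r - 1) (k := r⁻¹) hY hplogY fun y => by
    linarith [plog_le_plog_add_div hr y, hdiv y]
  linarith [hdiv (∫ ω, Y ω ∂μ)]

theorem stmt_13_general (d : ℕ) {Ω : Type*} [MeasurableSpace Ω] (μ : Measure Ω)
    [IsProbabilityMeasure μ]
    (x' : Ω → EuclideanSpace ℝ (Fin d)) (x xstar : EuclideanSpace ℝ (Fin d))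
    (α c M ε : ℝ) (hε : 0 < ε)
    (hstep : α ^ 2 * M ^ 2 < 2 * α * c * ε)
    (hout : ε < ‖x - xstar‖ ^ 2)
    (hint2 : Integrable (fun ω => ‖x' ω - xstar‖ ^ 2) μ)
    (hintplog : Integrable (fun ω => plog (‖x' ω - xstar‖ ^ 2 / ε)) μ)
    (hcontr : ∫ ω, ‖x' ω - xstar‖ ^ 2 ∂μ
        ≤ (1 - 2 * α * c) * ‖x - xstar‖ ^ 2 + α ^ 2 * M ^ 2) :
    (ε / (2 * α * c * ε - α ^ 2 * M ^ 2)) * ∫ ω, plog (‖x' ω - xstar‖ ^ 2 / ε) ∂μ + 1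
      ≤ (ε / (2 * α * c * ε - α ^ 2 * M ^ 2)) * plog (‖x - xstar‖ ^ 2 / ε) := by
  set r := ‖x - xstar‖ ^ 2 / ε with hr_def
  set m := α ^ 2 * M ^ 2 / ε with hm_def
  have hr : 1 ≤ r := (one_le_div hε).2 hout.le
  have hm : 0 ≤ m := by positivity
  have hdrift : 0 < 2 * α * c - m := by
    rw [sub_pos, div_lt_iff₀ hε]; exact hstep
  have hβ : ε / (2 * α * c * ε - α ^ 2 * M ^ 2) = (2 * α * c - m)⁻¹ := by
    rw [hm_def, sub_div' hε.ne', inv_div]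
  have hmean : ∫ ω, ‖x' ω - xstar‖ ^ 2 / ε ∂μ ≤ (1 - 2 * α * c) * r + m := by
    rw [integral_div, div_le_iff₀ hε]
    calc _ ≤ _ := hcontr
      _ = ((1 - 2 * α * c) * r + m) * ε := by rw [hr_def, hm_def]; field_simp
  have hplog : ∫ ω, plog (‖x' ω - xstar‖ ^ 2 / ε) ∂μ ≤ plog r - (2 * α * c - m) := by
    calc _ ≤ plog r + (∫ ω, ‖x' ω - xstar‖ ^ 2 / ε ∂μ - r) / r :=
          integral_plog_le hr (hint2.div_const ε) hintplog
      _ ≤ plog r + ((1 - 2 * α * c) * r + m - r) / r := by gcongr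
      _ = plog r - 2 * α * c + m / r := by field_simp; ring
      _ ≤ plog r - (2 * α * c - m) := by linarith [div_le_self hm hr]
  rw [hβ]
  calc (2 * α * c - m)⁻¹ * ∫ ω, plog (‖x' ω - xstar‖ ^ 2 / ε) ∂μ + 1
      ≤ (2 * α * c - m)⁻¹ * (plog r - (2 * α * c - m)) + 1 := by gcongr
    _ = (2 * α * c - m)⁻¹ * plog r := by field_simp; ring

theorem stmt_13 (d : ℕ) {Ω : Type*} [MeasurableSpace Ω] (μ : Measure Ω)
    [IsProbabilityMeasure μ]
    (x' : Ω → EuclideanSpace ℝ (Fin d)) (x xstar : EuclideanSpace ℝ (Fin d))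
    (α c M ε : ℝ) (hε : 0 < ε)
    (hαc0 : 0 < 2 * α * c) (hαc1 : 2 * α * c < 1)
    (hstep : α ^ 2 * M ^ 2 < 2 * α * c * ε)
    (hout : ε < ‖x - xstar‖ ^ 2)
    (hint2 : Integrable (fun ω => ‖x' ω - xstar‖ ^ 2) μ)
    (hintplog : Integrable (fun ω => plog (‖x' ω - xstar‖ ^ 2 / ε)) μ)
    (hcontr : ∫ ω, ‖x' ω - xstar‖ ^ 2 ∂μ
        ≤ (1 - 2 * α * c) * ‖x - xstar‖ ^ 2 + α ^ 2 * M ^ 2) :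
    (ε / (2 * α * c * ε - α ^ 2 * M ^ 2)) * ∫ ω, plog (‖x' ω - xstar‖ ^ 2 / ε) ∂μ + 1
      ≤ (ε / (2 * α * c * ε - α ^ 2 * M ^ 2)) * plog (‖x - xstar‖ ^ 2 / ε) :=
  stmt_13_general d μ x' x xstar α c M ε hε hstep hout hint2 hintplog hcontr
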